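/- Let (E, ⟨·,·⟩, ⟦·,·⟧, ρ) be a Courant algebroid over M and J : E → E a vector bundle automorphism covering the identity. If ⟦JA, JB⟧ + J²⟦A,B⟧ − J(⟦JA,B⟧ + ⟦A,JB⟧) = 0 for all sections A, B of E, then the quadruple (E, ⟨·,·⟩_J, ⟦·,·⟧_J, ρ_J) — where ⟨A,B⟩_J = ⟨JA,JB⟩, ⟦A,B⟧_J = ⟦JA,B⟧ + ⟦A,JB⟧ − J⟦A,B⟧, and ρ_J = ρ∘J — is again a Courant algebroid, and J is a Courant algebroid isomorphism from (E, ⟨·,·⟩_J, ⟦·,·⟧_J, ρ_J) to (E, ⟨·,·⟩, ⟦·,·⟧, ρ). -/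

import Mathlib

noncomputable section

/-!
We axiomatize the Cartan calculus of a smooth manifold: the graded spaces of
differential forms and of multivector fields together with the standard
operations between them (wedge products, de Rham differential, Schouten
bracket, interior products, evaluations).  All the geometric notions of the
paper (Poisson bivector fields, `(1,1)`-tensors and their transposes, the
brackets `[·,·]_B` on 1-forms, `i_N`, `d_N`, compatibility, Poisson
(quasi-)Nijenhuis structures, the Gerstenhaber bracket of the cotangent Lie
algebroid `(T*M)_π`, (quasi-)Lie bialgebroids, the standard Courant algebroid
`TM ⊕ T*M`, …) are then expressed in this framework.
-/

/-- The Cartan calculus of a smooth manifold `M`: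
`Ω p` is the space of differential `p`-forms (`Ω 0` = smooth functions,
trivial in negative degrees), `X p` is the space of `p`-multivector fields
(`X 1` = vector fields), together with the wedge products, the de Rham
differential `d` (with `d ∘ d = 0`), the Schouten bracket `sch` of multivector
fields (extending the Lie bracket of vector fields, with `sch X f = X(f)` for
a function `f`), the interior products `ins` (of forms by vector fields) and
`insX` (of multivectors by 1-forms), the evaluation `ev` of `p`-forms on `p`
vector fields, the evaluation `evX` of `p`-vector fields on `p` 1-forms, the
multiplication `fsmulΩ`/`fsmulX` of forms and multivectors by functions and
the identification `ι` of functions with 0-multivector fields. -/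
structure Calculus where
  Ω : ℤ → Type
  X : ℤ → Type
  ΩGrp : ∀ p, AddCommGroup (Ω p)
  XGrp : ∀ p, AddCommGroup (X p)
  ΩMod : ∀ p, Module ℝ (Ω p)
  XMod : ∀ p, Module ℝ (X p)
  Ω_triv : ∀ p : ℤ, p < 0 → ∀ a : Ω p, a = 0
  X_triv : ∀ p : ℤ, p < 0 → ∀ a : X p, a = 0
  wedge : ∀ {p q : ℤ}, Ω p → Ω q → Ω (p + q)
  wedgeX : ∀ {p q : ℤ}, X p → X q → X (p + q)
  fsmulΩ : ∀ {p : ℤ}, Ω 0 → Ω p → Ω p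
  fsmulX : ∀ {p : ℤ}, Ω 0 → X p → X p
  d : ∀ {p : ℤ}, Ω p → Ω (p + 1)
  d_add : ∀ {p : ℤ} (a b : Ω p), d (a + b) = d a + d b
  d_d : ∀ {p : ℤ} (a : Ω p), d (d a) = 0
  sch : ∀ {p q : ℤ}, X p → X q → X (p + q - 1)
  ins : ∀ {p : ℤ}, X 1 → Ω p → Ω (p - 1)
  insX : ∀ {p : ℤ}, Ω 1 → X p → X (p - 1)
  ev : ∀ {n : ℕ}, Ω (n : ℤ) → (Fin n → X 1) → Ω 0
  evX : ∀ {n : ℕ}, X (n : ℤ) → (Fin n → Ω 1) → Ω 0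
  ι : Ω 0 ≃ X 0

attribute [instance] Calculus.ΩGrp Calculus.XGrp Calculus.ΩMod Calculus.XMod

namespace Calculus

variable (M : Calculus)

/-- transport of a form along an equality of degrees -/
def oc {p q : ℤ} (h : p = q) (a : M.Ω p) : M.Ω q := h ▸ a

/-- transport of a multivector field along an equality of degrees -/
def xc {p q : ℤ} (h : p = q) (a : M.X p) : M.X q := h ▸ a

/-- the action `X(f)` of a vector field on a function (via the Schouten bracket) -/
def act (Xv : M.X 1) (f : M.Ω 0) : M.Ω 0 :=
  M.ι.symm (M.xc (show (1 : ℤ) + 0 - 1 = 0 by omega) (M.sch Xv (M.ι f)))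

/-- the Lie bracket of vector fields -/
def lb (Xv Yv : M.X 1) : M.X 1 :=
  M.xc (show (1 : ℤ) + 1 - 1 = 1 by omega) (M.sch Xv Yv)

/-- the pairing `ξ(X)` of a 1-form with a vector field -/
def pair (ξ : M.Ω 1) (Xv : M.X 1) : M.Ω 0 := M.ev (n := 1) ξ ![Xv]

/-- the Lie derivative of forms, via Cartan's magic formula
`L_X = i_X ∘ d + d ∘ i_X` -/
def lieD {p : ℤ} (Xv : M.X 1) (α : M.Ω p) : M.Ω p :=
  M.oc (by omega) (M.ins Xv (M.d α)) + M.oc (by omega) (M.d (M.ins Xv α))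

/-- the bracket `[α,β]_B = L_{Bα}β − L_{Bβ}α − d(β(Bα))` on 1-forms induced by
a bundle map `B : T*M → TM` -/
def formBr (B : M.Ω 1 → M.X 1) (α β : M.Ω 1) : M.Ω 1 :=
  M.lieD (B α) β - M.lieD (B β) α -
    M.oc (show (0 : ℤ) + 1 = 1 by omega) (M.d (M.pair β (B α)))

/-- the deformed bracket `[X,Y]_N = [NX,Y] + [X,NY] − N[X,Y]` of vector fields -/
def lbN (N : M.X 1 → M.X 1) (Xv Yv : M.X 1) : M.X 1 :=
  M.lb (N Xv) Yv + M.lb Xv (N Yv) - N (M.lb Xv Yv)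

/-- `sharp` is the bundle map `π^♯ : T*M → TM` of the bivector field `π`:
`β(π^♯ α) = π(α,β)` -/
def IsSharp (π : M.X 2) (sharp : M.Ω 1 → M.X 1) : Prop :=
  ∀ α β : M.Ω 1, M.pair β (sharp α) = M.evX (n := 2) π ![α, β]

/-- `Nt` is the transpose `N^T` of the `(1,1)`-tensor `N`:
`(N^T α)(X) = α(N X)` -/
def IsTranspose (N : M.X 1 → M.X 1) (Nt : M.Ω 1 → M.Ω 1) : Prop :=
  ∀ (α : M.Ω 1) (Xv : M.X 1), M.pair (Nt α) Xv = M.pair α (N Xv)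

/-- the bivector field `π` (with bundle map `sharp = π^♯`) and the
`(1,1)`-tensor `N` (with transpose `Nt = N^T`) are compatible:
`N ∘ π^♯ = π^♯ ∘ N^T` and `C^N_{π^♯} = 0`, i.e.
`[α,β]_{Nπ^♯} = [N^Tα,β]_{π^♯} + [α,N^Tβ]_{π^♯} − N^T[α,β]_{π^♯}`. -/
def Compatible (sharp : M.Ω 1 → M.X 1) (N : M.X 1 → M.X 1)
    (Nt : M.Ω 1 → M.Ω 1) : Prop :=
  (∀ α : M.Ω 1, N (sharp α) = sharp (Nt α)) ∧
  ∀ α β : M.Ω 1,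
    M.formBr (fun γ => N (sharp γ)) α β =
      M.formBr sharp (Nt α) β + M.formBr sharp α (Nt β) -
        Nt (M.formBr sharp α β)

/-- `iN` is the degree-0 derivation `i_N` of `Ω•(M)` induced by the
`(1,1)`-tensor `N`: `(i_N α)(X_1,…,X_p) = Σ_i α(X_1,…,N X_i,…,X_p)` -/
def IsIN (N : M.X 1 → M.X 1) (iN : ∀ p : ℤ, M.Ω p → M.Ω p) : Prop :=
  ∀ (n : ℕ) (α : M.Ω (n : ℤ)) (Xs : Fin n → M.X 1),
    M.ev (iN n α) Xs =
      (Finset.univ : Finset (Fin n)).sum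
        fun i => M.ev α (Function.update Xs i (N (Xs i)))

/-- the degree-1 derivation `d_N = i_N ∘ d − d ∘ i_N` of `Ω•(M)` -/
def dN (iN : ∀ p : ℤ, M.Ω p → M.Ω p) (p : ℤ) (α : M.Ω p) : M.Ω (p + 1) :=
  iN (p + 1) (M.d α) - M.d (iN p α)

/-- the torsion identity
`[NX,NY] − N([NX,Y] + [X,NY] − N[X,Y]) = π^♯(i_{X∧Y} φ)` -/
def TorsionEq (sharp : M.Ω 1 → M.X 1) (N : M.X 1 → M.X 1) (φ : M.Ω 3) : Prop :=
  ∀ Xv Yv : M.X 1,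
    M.lb (N Xv) (N Yv) - N (M.lbN N Xv Yv) =
      sharp (M.oc (show (3 : ℤ) - 1 - 1 = 1 by omega) (M.ins Yv (M.ins Xv φ)))

/-- `(M, π, N, φ)` is a Poisson quasi-Nijenhuis manifold: `π` is Poisson, `N`
is compatible with `π`, `φ` and `i_N φ` are closed 3-forms, and the Nijenhuis
torsion of `N` equals `π^♯(i_{X∧Y}φ)`. -/
def IsPQN (π : M.X 2) (sharp : M.Ω 1 → M.X 1) (N : M.X 1 → M.X 1)
    (Nt : M.Ω 1 → M.Ω 1) (iN : ∀ p : ℤ, M.Ω p → M.Ω p) (φ : M.Ω 3) : Prop :=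
  M.sch π π = 0 ∧ M.Compatible sharp N Nt ∧ M.d φ = 0 ∧ M.d (iN 3 φ) = 0 ∧
    M.TorsionEq sharp N φ

/-- `(M, π, N)` is a Poisson–Nijenhuis manifold: `π` is Poisson, `N` is
compatible with `π`, and the Nijenhuis torsion of `N` vanishes. -/
def IsPN (π : M.X 2) (sharp : M.Ω 1 → M.X 1) (N : M.X 1 → M.X 1)
    (Nt : M.Ω 1 → M.Ω 1) : Prop :=
  M.sch π π = 0 ∧ M.Compatible sharp N Nt ∧
    ∀ Xv Yv : M.X 1, M.lb (N Xv) (N Yv) - N (M.lbN N Xv Yv) = 0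

/-- `gbr` is the Gerstenhaber (Koszul–Schouten) bracket on `Ω•(M)` induced by
the cotangent Lie algebroid `(T*M)_π` (anchor `sharp = π^♯`, bracket
`[·,·]_{π^♯}` on 1-forms): it vanishes on functions, is given by the anchor on
a 1-form and a function, by `[·,·]_{π^♯}` on 1-forms, and is extended to all
degrees by graded skew-symmetry and the graded Leibniz rule. -/
def IsGerstenhaber (sharp : M.Ω 1 → M.X 1)
    (gbr : ∀ p q : ℤ, M.Ω p → M.Ω q → M.Ω (p + q - 1)) : Prop :=
  (∀ f g : M.Ω 0, gbr 0 0 f g = 0) ∧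
  (∀ (α : M.Ω 1) (f : M.Ω 0),
      gbr 1 0 α f = M.oc (show (0 : ℤ) = 1 + 0 - 1 by omega) (M.act (sharp α) f)) ∧
  (∀ α β : M.Ω 1,
      gbr 1 1 α β = M.oc (show (1 : ℤ) = 1 + 1 - 1 by omega) (M.formBr sharp α β)) ∧
  (∀ (p q : ℤ) (α : M.Ω p) (β : M.Ω q),
      gbr p q α β =
        -(((-1 : ℤ) ^ ((p - 1) * (q - 1)).natAbs) •
            M.oc (by omega) (gbr q p β α))) ∧
  (∀ (p q r : ℤ) (α : M.Ω p) (β : M.Ω q) (γ : M.Ω r),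
      gbr p (q + r) α (M.wedge β γ) =
        M.oc (by omega) (M.wedge (gbr p q α β) γ) +
          ((-1 : ℤ) ^ ((p - 1) * q).natAbs) •
            M.oc (by omega) (M.wedge β (gbr p r α γ)))

/-- `δ` is a degree-1 derivation of the Gerstenhaber algebra
`(Ω•(M), ∧, gbr)`. -/
def IsGerDerivation (gbr : ∀ p q : ℤ, M.Ω p → M.Ω q → M.Ω (p + q - 1))
    (δ : ∀ p : ℤ, M.Ω p → M.Ω (p + 1)) : Prop :=
  (∀ (p : ℤ) (a b : M.Ω p), δ p (a + b) = δ p a + δ p b) ∧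
  (∀ (p q : ℤ) (α : M.Ω p) (β : M.Ω q),
      δ (p + q) (M.wedge α β) =
        M.oc (by omega) (M.wedge (δ p α) β) +
          ((-1 : ℤ) ^ p.natAbs) • M.oc (by omega) (M.wedge α (δ q β))) ∧
  (∀ (p q : ℤ) (α : M.Ω p) (β : M.Ω q),
      δ (p + q - 1) (gbr p q α β) =
        M.oc (by omega) (gbr (p + 1) q (δ p α) β) +
          ((-1 : ℤ) ^ (p - 1).natAbs) • M.oc (by omega) (gbr p (q + 1) α (δ q β)))

/-- `((T*M)_π, δ, φ)` is a quasi-Lie bialgebroid: `(T*M)_π` is a Lie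
algebroid (i.e. `π` is Poisson), `δ` is a degree-1 derivation of its
Gerstenhaber algebra `(Ω•(M), ∧, [·,·]_{π^♯})`, `δ² = [φ, ·]_{π^♯}` and
`δ φ = 0`. -/
def IsQuasiLieBialgebroid (π : M.X 2)
    (gbr : ∀ p q : ℤ, M.Ω p → M.Ω q → M.Ω (p + q - 1))
    (δ : ∀ p : ℤ, M.Ω p → M.Ω (p + 1)) (φ : M.Ω 3) : Prop :=
  M.sch π π = 0 ∧ M.IsGerDerivation gbr δ ∧
    (∀ (p : ℤ) (α : M.Ω p), δ (p + 1) (δ p α) = M.oc (by omega) (gbr 3 p φ α)) ∧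
    δ 3 φ = 0

/-- `((T*M)_π, δ)` is a Lie bialgebroid: `(T*M)_π` is a Lie algebroid (i.e.
`π` is Poisson) and `δ` is a degree-1 derivation of its Gerstenhaber algebra
with `δ² = 0`. -/
def IsLieBialgebroid (π : M.X 2)
    (gbr : ∀ p q : ℤ, M.Ω p → M.Ω q → M.Ω (p + q - 1))
    (δ : ∀ p : ℤ, M.Ω p → M.Ω (p + 1)) : Prop :=
  M.sch π π = 0 ∧ M.IsGerDerivation gbr δ ∧
    ∀ (p : ℤ) (α : M.Ω p), δ (p + 1) (δ p α) = 0

/-- `S` is the extension of `π^♯` to a degree-preserving algebra morphism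
`Ω•(M) → X•(M)` from forms to multivector fields (the identity on functions,
`sharp = π^♯` on 1-forms, additive and multiplicative for the wedge
products). -/
def IsSharpExt (sharp : M.Ω 1 → M.X 1) (S : ∀ p : ℤ, M.Ω p → M.X p) : Prop :=
  (∀ f : M.Ω 0, S 0 f = M.ι f) ∧
  (∀ α : M.Ω 1, S 1 α = sharp α) ∧
  (∀ (p : ℤ) (a b : M.Ω p), S p (a + b) = S p a + S p b) ∧
  (∀ (p q : ℤ) (α : M.Ω p) (β : M.Ω q),
      S (p + q) (M.wedge α β) = M.wedgeX (S p α) (S q β))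

end Calculus

namespace Calculus

variable (M : Calculus)

/-- sections of the generalized tangent bundle `TM ⊕ T*M` -/
abbrev GT : Type := M.X 1 × M.Ω 1

/-- the pairing `⟨X+ξ, Y+η⟩ = (1/2)(ξ(Y) + η(X))` of the standard Courant
algebroid `TM ⊕ T*M` -/
def stdIp (v w : M.GT) : M.Ω 0 :=
  ((1 : ℝ) / 2) • (M.pair v.2 w.1 + M.pair w.2 v.1)

/-- the standard Courant bracket
`⟦X+ξ, Y+η⟧ = [X,Y] + L_X η − L_Y ξ + (1/2) d(ξ(Y) − η(X))` -/
def stdBr (v w : M.GT) : M.GT :=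
  (M.lb v.1 w.1,
    M.lieD v.1 w.2 - M.lieD w.1 v.2 +
      ((1 : ℝ) / 2) • M.oc (show (0 : ℤ) + 1 = 1 by omega)
        (M.d (M.pair v.2 w.1 - M.pair w.2 v.1)))

/-- the anchor of the standard Courant algebroid: projection onto `TM` -/
def stdRho (v : M.GT) : M.X 1 := v.1

/-- deformation of the standard pairing by a bundle endomorphism `J` -/
def defIp (J : M.GT → M.GT) (v w : M.GT) : M.Ω 0 := M.stdIp (J v) (J w)

/-- deformation `⟦v,w⟧_J = ⟦Jv,w⟧ + ⟦v,Jw⟧ − J⟦v,w⟧` of the standard Courant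
bracket by a bundle endomorphism `J` -/
def defBr (J : M.GT → M.GT) (v w : M.GT) : M.GT :=
  M.stdBr (J v) w + M.stdBr v (J w) - J (M.stdBr v w)

/-- the bundle map `J = (N, π^♯; σ_♭, −N^*)` of `TM ⊕ T*M` built from a
`(1,1)`-tensor `N` (with transpose `Nt`), a bivector field (via `sharp = π^♯`)
and a 2-form (via `σflat = σ_♭`) -/
def Jblocks (N : M.X 1 → M.X 1) (sharp : M.Ω 1 → M.X 1)
    (σflat : M.X 1 → M.Ω 1) (Nt : M.Ω 1 → M.Ω 1) (v : M.GT) : M.GT :=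
  (N v.1 + sharp v.2, σflat v.1 - Nt v.2)

/-- the vector-field component of the mixed bracket
`⟦X, ξ⟧ = … − (i_ξ δ_{T*M} X + (1/2) δ_{T*M}(ξX))` of the double of the
quasi-Lie bialgebroid `((T*M)_π, d_N, φ)`, where `δ_{T*M} = [π, ·]` is the
Schouten bracket with `π` -/
def dblMixV (π : M.X 2) (Xv : M.X 1) (ξ : M.Ω 1) : M.X 1 :=
  -(M.xc (show (2 : ℤ) + 1 - 1 - 1 = 1 by omega) (M.insX ξ (M.sch π Xv)) +
      ((1 : ℝ) / 2) • M.xc (show (2 : ℤ) + 0 - 1 = 1 by omega)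
        (M.sch π (M.ι (M.pair ξ Xv))))

/-- the 1-form component `i_X δ_{TM} ξ + (1/2) δ_{TM}(ξX)` of the mixed
bracket of the double of the quasi-Lie bialgebroid `((T*M)_π, d_N, φ)`,
where `δ_{TM} = d_N` -/
def dblMixF (iN : ∀ p : ℤ, M.Ω p → M.Ω p) (Xv : M.X 1) (ξ : M.Ω 1) : M.Ω 1 :=
  M.oc (show (1 : ℤ) + 1 - 1 = 1 by omega) (M.ins Xv (M.dN iN 1 ξ)) +
    ((1 : ℝ) / 2) • M.oc (show (0 : ℤ) + 1 = 1 by omega) (M.dN iN 0 (M.pair ξ Xv))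

/-- the bracket of the double Courant algebroid `(TM)_N ⊕ (T*M)_π` of the
quasi-Lie bialgebroid `((T*M)_π, d_N, dσ)`:
`⟦ξ,η⟧ = [ξ,η]_{π^♯}`, `⟦X,Y⟧ = [X,Y]_N + (dσ)(X,Y,·)`,
`⟦X,ξ⟧ = (i_X d_N ξ + ½ d_N(ξX)) − (i_ξ [π,X] + ½ [π, ξX])`. -/
def dblBr (π : M.X 2) (sharp : M.Ω 1 → M.X 1) (N : M.X 1 → M.X 1)
    (iN : ∀ p : ℤ, M.Ω p → M.Ω p) (σ : M.Ω 2) (v w : M.GT) : M.GT :=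
  (M.lbN N v.1 w.1 + M.dblMixV π v.1 w.2 - M.dblMixV π w.1 v.2,
    M.formBr sharp v.2 w.2 +
      M.oc (show (2 : ℤ) + 1 - 1 - 1 = 1 by omega)
        (M.ins w.1 (M.ins v.1 (M.d σ))) +
      M.dblMixF iN v.1 w.2 - M.dblMixF iN w.1 v.2)

end Calculus

/-- The data of a (pre-)Courant algebroid structure on a `C^∞(M)`-module `E`
of sections over the calculus `M`: multiplication of sections by functions,
pairing, skew-symmetric bracket and anchor. -/
structure CourantData (M : Calculus) (E : Type) [AddCommGroup E] [Module ℝ E] where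
  fsmul : M.Ω 0 → E → E
  ip : E → E → M.Ω 0
  br : E → E → E
  ρ : E → M.X 1

/-- The axioms of a Courant algebroid: the pairing is symmetric and
non-degenerate, the bracket is skew-symmetric, and there is an operator
`D : C^∞(M) → Γ(E)` with `⟨Df, A⟩ = (1/2) ρ(A) f` such that the anchor,
Jacobiator, Leibniz-rule, `ρ ∘ D = 0` and invariance axioms hold. -/
def CourantData.IsCourant {M : Calculus} {E : Type} [AddCommGroup E]
    [Module ℝ E] (c : CourantData M E) : Prop :=
  (∀ A B, c.ip A B = c.ip B A) ∧
  (∀ A, (∀ B, c.ip A B = 0) → A = 0) ∧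
  (∀ A B, c.br A B = -c.br B A) ∧
  ∃ Dop : M.Ω 0 → E,
    (∀ f A, c.ip (Dop f) A = ((1 : ℝ) / 2) • M.act (c.ρ A) f) ∧
    (∀ A B, c.ρ (c.br A B) = M.lb (c.ρ A) (c.ρ B)) ∧
    (∀ A B C, c.br (c.br A B) C + c.br (c.br B C) A + c.br (c.br C A) B =
        ((1 : ℝ) / 3) •
          Dop (c.ip (c.br A B) C + c.ip (c.br B C) A + c.ip (c.br C A) B)) ∧
    (∀ A f B, c.br A (c.fsmul f B) =
        c.fsmul f (c.br A B) + c.fsmul (M.act (c.ρ A) f) B -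
          c.fsmul (c.ip A B) (Dop f)) ∧
    (∀ f, c.ρ (Dop f) = 0) ∧
    (∀ A B C, M.act (c.ρ A) (c.ip B C) =
        c.ip (c.br A B + Dop (c.ip A B)) C + c.ip B (c.br A C + Dop (c.ip A C)))

/-!
The hypothesis on `J` says exactly that `J⟦A,B⟧_J = ⟦JA,JB⟧`. Since also `⟨A,B⟩_J = ⟨JA,JB⟩`
and `ρ_J = ρ ∘ J`, and `J` commutes with multiplication by functions, the deformed structure is
the pullback of the original one along the isomorphism `J`; every Courant axiom is transported
verbatim along an additive bijection (the factor `1/3` in the Jacobiator is respected because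
additive maps are `ℚ`-linear).
-/

namespace CourantData

variable {M : Calculus} {E F : Type} [AddCommGroup E] [Module ℝ E] [AddCommGroup F] [Module ℝ F]

@[simps]
def comap (c : CourantData M F) (e : E ≃+ F) : CourantData M E where
  fsmul f A := e.symm (c.fsmul f (e A))
  ip A B := c.ip (e A) (e B)
  br A B := e.symm (c.br (e A) (e B))
  ρ A := c.ρ (e A)

theorem IsCourant.comap {c : CourantData M F} (hc : c.IsCourant) (e : E ≃+ F) :
    (c.comap e).IsCourant := by
  obtain ⟨hsym, hnd, hskew, D, hD, hanch, hjac, hleib, hρD, hinv⟩ := hc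
  have map_third_smul : ∀ x : E, e ((3 : ℝ)⁻¹ • x) = (3 : ℝ)⁻¹ • e x := by
    exact_mod_cast map_inv_natCast_smul e ℝ ℝ 3
  refine ⟨fun A B => hsym (e A) (e B), fun A h => ?_, fun A B => ?_,
    fun f => e.symm (D f), fun f A => ?_, fun A B => ?_, fun A B C => ?_, fun A f B => ?_,
    fun f => ?_, fun A B C => ?_⟩
  · exact e.map_eq_zero_iff.mp <| hnd (e A) fun B => by simpa using h (e.symm B)
  · apply e.injective
    simpa using hskew (e A) (e B)
  · simpa using hD f (e A)
  · simpa using hanch (e A) (e B)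
  · apply e.injective
    simpa [map_third_smul] using hjac (e A) (e B) (e C)
  · apply e.injective
    simpa using hleib (e A) f (e B)
  · simpa using hρD f
  · simpa using hinv (e A) (e B) (e C)

def deform (c : CourantData M E) (J : E → E) : CourantData M E where
  fsmul := c.fsmul
  ip A B := c.ip (J A) (J B)
  br A B := c.br (J A) B + c.br A (J B) - J (c.br A B)
  ρ A := c.ρ (J A)

theorem map_deform_br (c : CourantData M E) (J : E →+ E)
    (hnij : ∀ A B, c.br (J A) (J B) + J (J (c.br A B)) - J (c.br (J A) B + c.br A (J B)) = 0)
    (A B : E) : J ((c.deform J).br A B) = c.br (J A) (J B) := by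
  simp only [deform, map_sub]
  rw [sub_eq_iff_eq_add, eq_comm, ← sub_eq_zero]
  exact hnij A B

theorem deform_eq_comap (c : CourantData M E) (e : E ≃+ E)
    (hlin : ∀ f A, e (c.fsmul f A) = c.fsmul f (e A))
    (hnij : ∀ A B, c.br (e A) (e B) + e (e (c.br A B)) - e (c.br (e A) B + c.br A (e B)) = 0) :
    c.deform e = c.comap e := by
  have hbr := c.map_deform_br e.toAddMonoidHom hnij
  simp only [deform, comap, mk.injEq, and_true, true_and]
  refine ⟨?_, ?_⟩ <;> ext A B <;> rw [e.eq_symm_apply]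
  · exact hlin A B
  · exact hbr A B

end CourantData

/-- Proposition 7.3 of the paper.  Let
`(E, ⟨·,·⟩, ⟦·,·⟧, ρ)` be a Courant algebroid over `M` and `J : E → E` a
vector bundle automorphism covering the identity (bijective, additive and
`C^∞(M)`-linear).  If
`⟦JA, JB⟧ + J²⟦A,B⟧ − J(⟦JA,B⟧ + ⟦A,JB⟧) = 0` for all sections `A`, `B` of
`E`, then the quadruple `(E, ⟨·,·⟩_J, ⟦·,·⟧_J, ρ_J)` — where
`⟨A,B⟩_J = ⟨JA,JB⟩`, `⟦A,B⟧_J = ⟦JA,B⟧ + ⟦A,JB⟧ − J⟦A,B⟧` and `ρ_J = ρ∘J` —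
is again a Courant algebroid, and `J` is a Courant algebroid isomorphism from
`(E, ⟨·,·⟩_J, ⟦·,·⟧_J, ρ_J)` to `(E, ⟨·,·⟩, ⟦·,·⟧, ρ)` (it intertwines the
brackets; it tautologically intertwines the pairings and the anchors). -/
theorem deformed_courant_algebroid (M : Calculus) (E : Type)
    [AddCommGroup E] [Module ℝ E] (c : CourantData M E)
    (hc : c.IsCourant) (J : E → E)
    (hbij : Function.Bijective J)
    (hadd : ∀ A B : E, J (A + B) = J A + J B)
    (hlin : ∀ (f : M.Ω 0) (A : E), J (c.fsmul f A) = c.fsmul f (J A))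
    (hnij : ∀ A B : E,
      c.br (J A) (J B) + J (J (c.br A B)) -
        J (c.br (J A) B + c.br A (J B)) = 0) :
    (CourantData.IsCourant
      { fsmul := c.fsmul
        ip := fun A B => c.ip (J A) (J B)
        br := fun A B => c.br (J A) B + c.br A (J B) - J (c.br A B)
        ρ := fun A => c.ρ (J A) }) ∧
    ∀ A B : E,
      J (c.br (J A) B + c.br A (J B) - J (c.br A B)) =
        c.br (J A) (J B) := by
  let e : E ≃+ E := AddEquiv.ofBijective (AddMonoidHom.mk' J hadd) hbij
  refine ⟨?_, c.map_deform_br e.toAddMonoidHom hnij⟩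
  change (c.deform e).IsCourant
  rw [c.deform_eq_comap e hlin hnij]
  exact hc.comap e
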